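/- arXiv:1806.03567 — 3 statements merged into one kernel-verified Lean document; each statement's English description precedes it below -/
import Mathlib

section
/- Let N ≥ 2 be even. There exists a single tensor T ∈ ℂ² ⊗ (ℂ²)^{⊗4} such that the torus contraction φ(T) ∈ (ℂ²)^{⊗2N}, obtained by placing a copy of T at every vertex of the 2×N grid on the torus and contracting along all entanglement edges, has S-flattening of rank exactly 2^{N−1}, where S consists of the physical factors at the N + 1 vertices given by both vertices of column 1 together with the top-row vertices of columns 2,…,N. Consequently φ(T) has border rank at least 2^{N−1}. -/
open scoped BigOperators

/-- The contraction map `ψ` of the `2 × N` grid on the torus.  Vertices are pairs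
`(r, c) : Fin 2 × Fin N` (`r` the row, `c` the column); each vertex `v` carries a tensor
`T v ∈ ℂ² ⊗ (ℂ²)^{⊗4}` given in coordinates as `T v b u x d l` where `b` is the physical index
and `u, x, d, l` are the indices of the upper, right, lower and left edges at `v`.
For each column `c` there are two vertical entanglement edges joining `(0,c)` and `(1,c)`:
edge `U c` is the upper edge of `(0,c)` and the lower edge of `(1,c)`, and edge `D c` is the
lower edge of `(0,c)` and the upper edge of `(1,c)`.  For each vertex `(r,c)` the horizontal
entanglement edge `H (r,c)` is the right edge of `(r,c)` and the left edge of `(r, c+1 mod N)`.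
The coordinate of `psi N hN T` at a physical multi-index `b` is the sum over all assignments of
an index in `{1,2}` to every entanglement edge of the product over the vertices of the
corresponding coordinates of the `T v`. -/
noncomputable def psi (N : ℕ) (hN : 2 ≤ N)
    (T : Fin 2 × Fin N → (Fin 2 → Fin 2 → Fin 2 → Fin 2 → Fin 2 → ℂ)) :
    (Fin 2 × Fin N → Fin 2) → ℂ := fun b =>
  ∑ U : Fin N → Fin 2, ∑ D : Fin N → Fin 2, ∑ H : Fin 2 × Fin N → Fin 2,
    ∏ v : Fin 2 × Fin N,
      T v (b v) (if v.1 = 0 then U v.2 else D v.2) (H v)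
        (if v.1 = 0 then D v.2 else U v.2) (H (v.1, v.2 - ⟨1, by omega⟩))

/-- The torus contraction `φ(T)` obtained by placing the single tensor `T ∈ ℂ² ⊗ (ℂ²)^{⊗4}` at
every vertex of the `2 × N` grid on the torus. -/
noncomputable def phi (N : ℕ) (hN : 2 ≤ N)
    (T : Fin 2 → Fin 2 → Fin 2 → Fin 2 → Fin 2 → ℂ) : (Fin 2 × Fin N → Fin 2) → ℂ :=
  psi N hN (fun _ => T)

/-- The `S`-flattening of a tensor `t ∈ (ℂ²)^{⊗2N}` (tensor factors indexed by the vertices of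
the `2 × N` torus grid, `t` written in coordinates in the standard basis), as a matrix whose
columns are indexed by the multi-indices of the factors in `S` and whose rows are indexed by the
multi-indices of the remaining factors; thus `(flat N S t).mulVecLin` is exactly the flattening
map `(⊗_{v∈S} ℂ²)^* → ⊗_{v∉S} ℂ²` in coordinates, and its rank is `(flat N S t).rank`. -/
noncomputable def flat (N : ℕ) (S : Finset (Fin 2 × Fin N))
    (t : (Fin 2 × Fin N → Fin 2) → ℂ) :
    Matrix ({v : Fin 2 × Fin N // v ∉ S} → Fin 2) ({v : Fin 2 × Fin N // v ∈ S} → Fin 2) ℂ :=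
  Matrix.of fun b a => t fun v => if h : v ∈ S then a ⟨v, h⟩ else b ⟨v, h⟩

/-- `cpRankLE t r` says the tensor `t ∈ (ℂ²)^{⊗2N}` (factors indexed by the torus grid
vertices, coordinates in the standard basis) is a sum of `r` rank-one (pure) tensors. -/
def cpRankLE {N : ℕ} (t : (Fin 2 × Fin N → Fin 2) → ℂ) (r : ℕ) : Prop :=
  ∃ w : Fin r → (Fin 2 × Fin N) → Fin 2 → ℂ,
    t = fun x => ∑ j : Fin r, ∏ v : Fin 2 × Fin N, w j v (x v)



private lemma sum_delta {α : Type*} [Fintype α] [DecidableEq α] (a : α) (P : Prop)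
    [Decidable P] : (∑ x : α, if P ∧ x = a then (1:ℂ) else 0) = if P then 1 else 0 := by
  by_cases h : P <;> simp [h]

private lemma rank_flat_le {N r : ℕ} (S : Finset (Fin 2 × Fin N))
    (t : (Fin 2 × Fin N → Fin 2) → ℂ) (h : cpRankLE t r) : (flat N S t).rank ≤ r := by
  obtain ⟨w, rfl⟩ := h
  have key : flat N S (fun x => ∑ j : Fin r, ∏ v, w j v (x v)) =
      (Matrix.of fun (y : {v : Fin 2 × Fin N // v ∉ S} → Fin 2) (j : Fin r) =>
        ∏ v : {v : Fin 2 × Fin N // v ∉ S}, w j v.1 (y v)) *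
      (Matrix.of fun (j : Fin r) (a : {v : Fin 2 × Fin N // v ∈ S} → Fin 2) =>
        ∏ v : {v : Fin 2 × Fin N // v ∈ S}, w j v.1 (a v)) := by
    ext y a
    simp only [flat, Matrix.of_apply, Matrix.mul_apply]
    refine Finset.sum_congr rfl fun j _ => ?_
    rw [mul_comm, ← Fintype.prod_subtype_mul_prod_subtype (· ∈ S)
      (fun v => w j v (if h : v ∈ S then a ⟨v, h⟩ else y ⟨v, h⟩))]
    congr 1
    · refine Finset.prod_congr (by congr!) fun (v : {x // x ∈ S}) _ => ?_
      rw [dif_pos v.2]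
    · refine Finset.prod_congr (by congr!) fun (v : {x // ¬ x ∈ S}) _ => ?_
      rw [dif_neg v.2]
  rw [key]
  refine (Matrix.rank_mul_le_left _ _).trans ?_
  refine (Matrix.rank_le_card_width _).trans ?_
  simp

private lemma phi_delta (N : ℕ) (hN : 2 ≤ N) :
    phi N hN (fun b u x d l => if u = b ∧ d = b ∧ x = 0 ∧ l = 0 then (1:ℂ) else 0)
      = fun b => if ∀ c : Fin N, b (0, c) = b (1, c) then 1 else 0 := by
  funext b
  simp only [phi, psi]
  have hprod : ∀ (U D : Fin N → Fin 2) (H : Fin 2 × Fin N → Fin 2),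
      (∏ v : Fin 2 × Fin N,
        if (if v.1 = 0 then U v.2 else D v.2) = b v ∧ (if v.1 = 0 then D v.2 else U v.2) = b v ∧
            H v = 0 ∧ H (v.1, v.2 - ⟨1, by omega⟩) = 0 then (1:ℂ) else 0)
      = if (((∀ c, b (0, c) = b (1, c)) ∧ U = fun c => b (0, c)) ∧ (D = fun c => b (0, c))) ∧
          (H = fun _ => 0) then 1 else 0 := by
    intro U D H
    rw [Fintype.prod_boole]
    refine if_congr ?_ rfl rfl
    constructor
    · intro h
      have h0 : ∀ c, U c = b (0, c) ∧ D c = b (0, c) := by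
        intro c
        have := h (0, c); simp at this; exact ⟨this.1, this.2.1⟩
      have h1 : ∀ c, D c = b (1, c) ∧ U c = b (1, c) := by
        intro c
        have := h (1, c); simp at this; exact ⟨this.1, this.2.1⟩
      refine ⟨⟨⟨fun c => ?_, funext fun c => (h0 c).1⟩, funext fun c => (h0 c).2⟩,
        funext fun v => ?_⟩
      · rw [← (h0 c).1, (h1 c).2]
      · exact (h v).2.2.1
    · rintro ⟨⟨⟨hb, rfl⟩, rfl⟩, rfl⟩
      rintro ⟨r, c⟩
      fin_cases r <;> simp [hb c]
  simp only [hprod, sum_delta]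

private lemma fin2_eq_one : ∀ {i : Fin 2}, i ≠ 0 → i = 1 := by decide

private lemma fin2_one_ne_zero : (1 : Fin 2) ≠ 0 := by decide

/-- There is a single tensor `T ∈ ℂ² ⊗ (ℂ²)^{⊗4}` whose torus contraction `φ(T) ∈ (ℂ²)^{⊗2N}`
has `S`-flattening of rank exactly `2^{N-1}`, where `S` consists of the physical factors at the
`N + 1` vertices given by both vertices of column `1` (column index `0`) together with the
top-row vertices of the other columns.  Consequently `φ(T)` has border rank at least
`2^{N-1}`: for every `r < 2^{N-1}` it does not lie in the closure (Euclidean topology) of the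
set of tensors of rank at most `r`. -/
theorem stmt6 (N : ℕ) (hN : 2 ≤ N) (hNeven : Even N) :
    ∃ T : Fin 2 → Fin 2 → Fin 2 → Fin 2 → Fin 2 → ℂ,
      (flat N (Finset.univ.filter fun v => v.1 = 0 ∨ v.2 = ⟨0, by omega⟩) (phi N hN T)).rank = 2 ^ (N - 1) ∧
      ∀ r : ℕ, r < 2 ^ (N - 1) →
        phi N hN T ∉ closure {t : (Fin 2 × Fin N → Fin 2) → ℂ | cpRankLE t r} := by
  refine ⟨fun b u x d l => if u = b ∧ d = b ∧ x = 0 ∧ l = 0 then (1:ℂ) else 0, ?_⟩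
  set z : Fin N := ⟨0, by omega⟩ with hz
  set S : Finset (Fin 2 × Fin N) :=
    Finset.univ.filter (fun v => v.1 = 0 ∨ v.2 = z) with hS
  set T : Fin 2 → Fin 2 → Fin 2 → Fin 2 → Fin 2 → ℂ :=
    fun b u x d l => if u = b ∧ d = b ∧ x = 0 ∧ l = 0 then (1:ℂ) else 0 with hT
  have hmemS : ∀ v : Fin 2 × Fin N, v ∈ S ↔ (v.1 = 0 ∨ v.2 = z) := by
    intro v; simp [hS]
  have hm0 : ∀ c : Fin N, ((0 : Fin 2), c) ∈ S := fun c => (hmemS _).2 (Or.inl rfl)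
  have hm1z : ((1 : Fin 2), z) ∈ S := (hmemS _).2 (Or.inr rfl)
  have hm1c : ∀ c : Fin N, c ≠ z → ((1 : Fin 2), c) ∉ S := by
    intro c h hmem
    rcases (hmemS _).1 hmem with h1 | h2
    · exact fin2_one_ne_zero h1
    · exact h h2
  -- the complement has N - 1 elements
  have hcompl : Fintype.card {v : Fin 2 × Fin N // v ∉ S} = N - 1 := by
    have e : {v : Fin 2 × Fin N // v ∉ S} ≃ {c : Fin N // ¬ c = z} :=
      { toFun := fun v => ⟨v.1.2, fun h => v.2 ((hmemS _).2 (Or.inr h))⟩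
        invFun := fun c => ⟨(1, c.1), hm1c c.1 c.2⟩
        left_inv := fun v => by
          have hv1 : v.1.1 ≠ 0 := fun h => v.2 ((hmemS _).2 (Or.inl h))
          apply Subtype.ext
          exact Prod.ext (fin2_eq_one hv1).symm rfl
        right_inv := fun c => rfl }
    rw [Fintype.card_congr e, Fintype.card_subtype_compl, Fintype.card_subtype_eq]
    simp
  have hcardR : Fintype.card ({v : Fin 2 × Fin N // v ∉ S} → Fin 2) = 2 ^ (N - 1) := by
    rw [Fintype.card_fun, hcompl, Fintype.card_fin]
  -- the column selection
  set κ : ({v : Fin 2 × Fin N // v ∉ S} → Fin 2) → ({v : Fin 2 × Fin N // v ∈ S} → Fin 2) :=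
    fun y a => if h : a.1.2 = z then 0 else y ⟨(1, a.1.2), hm1c a.1.2 h⟩ with hκ
  set E : Matrix ({v : Fin 2 × Fin N // v ∈ S} → Fin 2)
      ({v : Fin 2 × Fin N // v ∉ S} → Fin 2) ℂ :=
    Matrix.of (fun a y => if a = κ y then 1 else 0) with hE
  set bb : ({v : Fin 2 × Fin N // v ∈ S} → Fin 2) → ({v : Fin 2 × Fin N // v ∉ S} → Fin 2) →
      (Fin 2 × Fin N → Fin 2) :=
    fun a y v => if h : v ∈ S then a ⟨v, h⟩ else y ⟨v, h⟩ with hbb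
  have hflat : ∀ t (y' : {v : Fin 2 × Fin N // v ∉ S} → Fin 2)
      (a : {v : Fin 2 × Fin N // v ∈ S} → Fin 2), flat N S t y' a = t (bb a y') := fun _ _ _ => rfl
  -- evaluations of bb (κ y) y'
  have hb0z : ∀ y y', bb (κ y) y' ((0 : Fin 2), z) = 0 := by
    intro y y'
    refine (dif_pos (hm0 z)).trans ?_
    exact dif_pos rfl
  have hb0c : ∀ y y' (c : Fin N) (h : c ≠ z),
      bb (κ y) y' ((0 : Fin 2), c) = y ⟨(1, c), hm1c c h⟩ := by
    intro y y' c h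
    refine (dif_pos (hm0 c)).trans ?_
    exact dif_neg h
  have hb1z : ∀ y y', bb (κ y) y' ((1 : Fin 2), z) = 0 := by
    intro y y'
    refine (dif_pos hm1z).trans ?_
    exact dif_pos rfl
  have hb1c : ∀ y y' (c : Fin N) (h : c ≠ z),
      bb (κ y) y' ((1 : Fin 2), c) = y' ⟨(1, c), hm1c c h⟩ := by
    intro y y' c h
    exact dif_neg (hm1c c h)
  -- the key computation: flat (phi T) * E = 1
  have hME : flat N S (phi N hN T) * E = 1 := by
    ext y' y
    rw [Matrix.mul_apply]
    have hsummand : ∀ a, flat N S (phi N hN T) y' a * E a y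
        = if a = κ y then flat N S (phi N hN T) y' a else 0 := by
      intro a
      simp only [hE, Matrix.of_apply]
      split <;> simp
    rw [Finset.sum_congr rfl fun a _ => hsummand a, Finset.sum_ite_eq' Finset.univ (κ y)]
    simp only [Finset.mem_univ, if_true]
    rw [hflat, hT, phi_delta, Matrix.one_apply]
    have hiff : (∀ c : Fin N, bb (κ y) y' ((0 : Fin 2), c) = bb (κ y) y' ((1 : Fin 2), c))
        ↔ y' = y := by
      constructor
      · intro h
        funext v
        have hv1 : v.1.1 ≠ 0 := fun hh => v.2 ((hmemS _).2 (Or.inl hh))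
        have hv2 : v.1.2 ≠ z := fun hh => v.2 ((hmemS _).2 (Or.inr hh))
        have hc := h v.1.2
        rw [hb0c y y' v.1.2 hv2, hb1c y y' v.1.2 hv2] at hc
        have hvv : v = ⟨(1, v.1.2), hm1c v.1.2 hv2⟩ :=
          Subtype.ext (Prod.ext (fin2_eq_one hv1) rfl)
        rw [hvv, ← hc]
      · rintro rfl
        intro c
        by_cases hc : c = z
        · subst hc
          rw [hb0z, hb1z]
        · rw [hb0c y' y' c hc, hb1c y' y' c hc]
    exact if_congr hiff rfl rfl
  constructor
  · apply le_antisymm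
    · exact (Matrix.rank_le_card_height _).trans (le_of_eq hcardR)
    · calc (2:ℕ) ^ (N - 1) = Fintype.card ({v : Fin 2 × Fin N // v ∉ S} → Fin 2) :=
            hcardR.symm
        _ = (1 : Matrix ({v : Fin 2 × Fin N // v ∉ S} → Fin 2)
              ({v : Fin 2 × Fin N // v ∉ S} → Fin 2) ℂ).rank := Matrix.rank_one.symm
        _ = (flat N S (phi N hN T) * E).rank := by rw [hME]
        _ ≤ _ := Matrix.rank_mul_le_left _ _
  · -- border rank lower bound
    intro r hr hcl
    set F : ((Fin 2 × Fin N → Fin 2) → ℂ) → ℂ := fun t => ((flat N S t) * E).det with hF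
    have hFcont : Continuous F := by
      refine Continuous.matrix_det ?_
      refine Continuous.matrix_mul ?_ continuous_const
      exact continuous_pi fun y => continuous_pi fun a => continuous_apply _
    have hclosed : IsClosed {t : (Fin 2 × Fin N → Fin 2) → ℂ | F t = 0} :=
      isClosed_eq hFcont continuous_const
    have hsub : {t : (Fin 2 × Fin N → Fin 2) → ℂ | cpRankLE t r} ⊆ {t | F t = 0} := by
      intro t ht
      by_contra hdet
      have hu : IsUnit ((flat N S t) * E) :=
        (Matrix.isUnit_iff_isUnit_det _).2 (isUnit_iff_ne_zero.2 hdet)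
      have h1 : ((flat N S t) * E).rank = Fintype.card ({v : Fin 2 × Fin N // v ∉ S} → Fin 2) :=
        Matrix.rank_of_isUnit _ hu
      have h2 : ((flat N S t) * E).rank ≤ r :=
        (Matrix.rank_mul_le_left _ _).trans (rank_flat_le S t ht)
      rw [h1, hcardR] at h2
      omega
    have hmem := closure_minimal hsub hclosed hcl
    simp only [Set.mem_setOf_eq, hF] at hmem
    rw [hME] at hmem
    simp at hmem
end

section
/- Let N ≥ 2 be even. The set of tuples (T_v)_v ∈ (ℂ² ⊗ (ℂ²)^{⊗4})^{2N} for which the row flattening of the torus contraction ψ((T_v)_v) ∈ (ℂ²)^{⊗2N} — namely the S-flattening where S consists of the physical factors at the N top-row vertices — has full rank 2^N is open and dense (in the Euclidean topology) in the parameter space (ℂ² ⊗ (ℂ²)^{⊗4})^{2N}. -/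
open scoped BigOperators

/-! The row flattening, with rows and columns indexed by the configurations of the bottom and
top row, is a square matrix of size `2^N` whose determinant is a polynomial in the entries of
the tensors, so full rank is an open condition. It is also dense: an entire function that is
nonzero at one point vanishes on no open set, by the identity theorem on complex lines. A point
where the determinant does not vanish is given by tensors that copy the physical indices of both
vertices of a column onto the vertical bond joining them, ignoring all other bonds; there the
flattening is a multiple of the identity. -/

set_option synthInstance.maxSize 4000

open Matrix Filter Topology

theorem Matrix.rank_eq_card_iff_det_ne_zero {n K : Type*} [Fintype n] [DecidableEq n] [Field K]
    (A : Matrix n n K) : A.rank = Fintype.card n ↔ A.det ≠ 0 := by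
  refine ⟨fun h => ?_, rank_of_det_ne_zero⟩
  have hrange : LinearMap.range A.mulVecLin = ⊤ := Submodule.eq_top_of_finrank_eq <| by
    rw [← rank, h, Module.finrank_fintype_fun_eq_card]
  exact ((isUnit_iff_isUnit_det A).mp
    (mulVec_surjective_iff_isUnit.mp (LinearMap.range_eq_top.mp hrange))).ne_zero

theorem Differentiable.dense_setOf_ne_zero {E F : Type*} [NormedAddCommGroup E]
    [NormedSpace ℂ E] [NormedAddCommGroup F] [NormedSpace ℂ F] [CompleteSpace F] {f : E → F}
    (hf : Differentiable ℂ f) {x₀ : E} (hx₀ : f x₀ ≠ 0) : Dense {x | f x ≠ 0} := by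
  intro x
  let ℓ : ℂ → E := fun z => x + z • (x₀ - x)
  have hℓ : Differentiable ℂ ℓ := by fun_prop
  have hfℓ : Differentiable ℂ (f ∘ ℓ) := hf.comp hℓ
  have hne : ∀ᶠ z in 𝓝[≠] (0 : ℂ), f (ℓ z) ≠ 0 := by
    refine not_frequently.mp fun hzero => hx₀ ?_
    have := AnalyticOnNhd.eqOn_zero_of_preconnected_of_frequently_eq_zero
      (fun z _ => hfℓ.analyticAt z) isPreconnected_univ (Set.mem_univ 0) hzero (Set.mem_univ 1)
    simpa [ℓ] using this
  refine mem_closure_of_tendsto ?_ hne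
  have hℓ₀ := hℓ.continuous.tendsto 0
  simp only [ℓ, zero_smul, add_zero] at hℓ₀
  exact hℓ₀.mono_left nhdsWithin_le_nhds

theorem differentiable_psi_apply (N : ℕ) (hN : 2 ≤ N) (b : Fin 2 × Fin N → Fin 2) :
    Differentiable ℂ fun T => psi N hN T b := by
  unfold psi
  fun_prop

noncomputable def rowFlat (N : ℕ) (hN : 2 ≤ N)
    (T : Fin 2 × Fin N → (Fin 2 → Fin 2 → Fin 2 → Fin 2 → Fin 2 → ℂ)) :
    Matrix (Fin N → Fin 2) (Fin N → Fin 2) ℂ :=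
  of fun p q => psi N hN T fun v => if v.1 = 0 then q v.2 else p v.2

def topRowEquiv (N : ℕ) :
    Fin N ≃ {v : Fin 2 × Fin N // v ∈ Finset.univ.filter fun v => v.1 = 0} where
  toFun c := ⟨(0, c), by simp⟩
  invFun v := v.1.2
  left_inv _ := rfl
  right_inv := fun ⟨⟨r, c⟩, h⟩ => by
    obtain rfl : r = 0 := by simpa using h
    rfl

def bottomRowEquiv (N : ℕ) :
    Fin N ≃ {v : Fin 2 × Fin N // v ∉ Finset.univ.filter fun v => v.1 = 0} where
  toFun c := ⟨(1, c), by simp⟩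
  invFun v := v.1.2
  left_inv _ := rfl
  right_inv := fun ⟨⟨r, c⟩, h⟩ => by
    obtain rfl : r = 1 := Fin.eq_one_of_ne_zero r (by simpa using h)
    rfl

theorem rowFlat_eq_submatrix_flat (N : ℕ) (hN : 2 ≤ N)
    (T : Fin 2 × Fin N → (Fin 2 → Fin 2 → Fin 2 → Fin 2 → Fin 2 → ℂ)) :
    rowFlat N hN T = (flat N (Finset.univ.filter fun v => v.1 = 0) (psi N hN T)).submatrix
      ((bottomRowEquiv N).arrowCongr (.refl _)) ((topRowEquiv N).arrowCongr (.refl _)) := by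
  ext p q
  simp only [rowFlat, flat, of_apply, submatrix_apply, Finset.mem_filter, Finset.mem_univ,
    true_and]
  rfl

theorem rank_flat_topRow (N : ℕ) (hN : 2 ≤ N)
    (T : Fin 2 × Fin N → (Fin 2 → Fin 2 → Fin 2 → Fin 2 → Fin 2 → ℂ)) :
    (flat N (Finset.univ.filter fun v => v.1 = 0) (psi N hN T)).rank =
      (rowFlat N hN T).rank := by
  rw [rowFlat_eq_submatrix_flat, rank_submatrix]

@[fun_prop]
theorem differentiable_rowFlat_apply (N : ℕ) (hN : 2 ≤ N) (p q : Fin N → Fin 2) :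
    Differentiable ℂ fun T => rowFlat N hN T p q :=
  differentiable_psi_apply N hN _

theorem differentiable_det_rowFlat (N : ℕ) (hN : 2 ≤ N) :
    Differentiable ℂ fun T => (rowFlat N hN T).det := by
  simp only [det_apply]
  fun_prop

def verticalCopy (N : ℕ) : Fin 2 × Fin N → (Fin 2 → Fin 2 → Fin 2 → Fin 2 → Fin 2 → ℂ) :=
  fun v b u _ d _ => if (if v.1 = 0 then u else d) = b then 1 else 0

theorem rowFlat_verticalCopy (N : ℕ) (hN : 2 ≤ N) :
    rowFlat N hN (verticalCopy N) = (2 ^ (3 * N) : ℂ) • 1 := by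
  ext p q
  have hprod : ∀ U D : Fin N → Fin 2, ∀ H : Fin 2 × Fin N → Fin 2,
      ∏ v : Fin 2 × Fin N, verticalCopy N v (if v.1 = 0 then q v.2 else p v.2)
        (if v.1 = 0 then U v.2 else D v.2) (H v) (if v.1 = 0 then D v.2 else U v.2)
        (H (v.1, v.2 - ⟨1, by omega⟩)) = if U = q ∧ U = p then 1 else 0 := by
    intro U D H
    simp [verticalCopy, Fintype.prod_boole, funext_iff]
  simp only [rowFlat, psi, of_apply, hprod, Finset.sum_ite_irrel, Finset.sum_const,
    Finset.card_univ, Fintype.card_pi, Fintype.card_fin, Finset.prod_const, Fintype.card_prod,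
    nsmul_eq_mul, Nat.cast_pow, Nat.cast_ofNat, mul_one, Matrix.smul_apply,
    one_apply, smul_eq_mul, mul_ite, mul_zero]
  rcases eq_or_ne p q with rfl | hpq
  · simp only [and_self, Finset.sum_ite_eq', Finset.mem_univ, if_true]
    ring
  · rw [if_neg hpq]
    exact Finset.sum_eq_zero fun U _ => if_neg fun h => hpq (h.2.symm.trans h.1)

theorem det_rowFlat_verticalCopy_ne_zero (N : ℕ) (hN : 2 ≤ N) :
    (rowFlat N hN (verticalCopy N)).det ≠ 0 := by
  simp [rowFlat_verticalCopy]

theorem stmt7_general (N : ℕ) (hN : 2 ≤ N) :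
    IsOpen {T : Fin 2 × Fin N → (Fin 2 → Fin 2 → Fin 2 → Fin 2 → Fin 2 → ℂ) |
        (flat N (Finset.univ.filter fun v => v.1 = 0) (psi N hN T)).rank = 2 ^ N} ∧
      Dense {T : Fin 2 × Fin N → (Fin 2 → Fin 2 → Fin 2 → Fin 2 → Fin 2 → ℂ) |
        (flat N (Finset.univ.filter fun v => v.1 = 0) (psi N hN T)).rank = 2 ^ N} := by
  have hset : {T : Fin 2 × Fin N → (Fin 2 → Fin 2 → Fin 2 → Fin 2 → Fin 2 → ℂ) |
      (flat N (Finset.univ.filter fun v => v.1 = 0) (psi N hN T)).rank = 2 ^ N} =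
      {T | (rowFlat N hN T).det ≠ 0} := by
    ext T
    rw [Set.mem_ofPred, Set.mem_ofPred, rank_flat_topRow, ← rank_eq_card_iff_det_ne_zero]
    simp
  have hdet := differentiable_det_rowFlat N hN
  rw [hset]
  exact ⟨isOpen_ne_fun hdet.continuous continuous_const,
    hdet.dense_setOf_ne_zero (det_rowFlat_verticalCopy_ne_zero N hN)⟩

/-- The set of tuples `(T_v)_v ∈ (ℂ² ⊗ (ℂ²)^{⊗4})^{2N}` for which the row flattening of the
torus contraction `ψ((T_v)_v) ∈ (ℂ²)^{⊗2N}` — the `S`-flattening where `S` consists of the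
physical factors at the `N` top-row vertices — has full rank `2^N` is open and dense (in the
Euclidean topology) in the parameter space `(ℂ² ⊗ (ℂ²)^{⊗4})^{2N}`. -/
theorem stmt7 (N : ℕ) (hN : 2 ≤ N) (hNeven : Even N) :
    IsOpen {T : Fin 2 × Fin N → (Fin 2 → Fin 2 → Fin 2 → Fin 2 → Fin 2 → ℂ) |
        (flat N (Finset.univ.filter fun v => v.1 = 0) (psi N hN T)).rank = 2 ^ N} ∧
      Dense {T : Fin 2 × Fin N → (Fin 2 → Fin 2 → Fin 2 → Fin 2 → Fin 2 → ℂ) |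
        (flat N (Finset.univ.filter fun v => v.1 = 0) (psi N hN T)).rank = 2 ^ N} :=
  stmt7_general N hN
end

section
/- Let N ≥ 2 be even. There exists a tuple of tensors (T_v)_v ∈ (ℂ² ⊗ (ℂ²)^{⊗4})^{2N} such that the torus contraction ψ((T_v)_v) ∈ (ℂ²)^{⊗2N} equals Σ_{i : {1,…,N} → {1,2}} e_{i(1)} ⊗ e_{i(1)} ⊗ e_{i(2)} ⊗ e_{i(2)} ⊗ ⋯ ⊗ e_{i(N)} ⊗ e_{i(N)} (physical factors ordered column by column, top vertex then bottom vertex), and this tensor has border rank exactly 2^N; in particular, a tensor of border rank 2^N arises as a 2×N torus tensor network contraction with bond dimension 2 and physical dimension 2. -/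
/-!
Put at every vertex the tensor that copies its physical index onto both vertical bonds and
forces both horizontal bonds to the first basis vector. The two vertical bonds of a column
then force the top and bottom physical indices of that column to agree, which is exactly the
coordinate description of the target tensor `T9 N`; it is visibly a sum of `2^N` pure tensors.
For the lower bound, flatten along the top row: a sum of `r` pure tensors has flattening rank
at most `r`, while the flattening of `T9 N`, read through the column labels, is the
`2^N × 2^N` identity matrix. A nonvanishing minor is an open condition, so this also holds in
the closure.
-/

open scoped BigOperators

/-- The tensor `Σ_{i : Fin N → Fin 2} e_{i(1)} ⊗ e_{i(1)} ⊗ e_{i(2)} ⊗ e_{i(2)} ⊗ ⋯ ⊗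
e_{i(N)} ⊗ e_{i(N)} ∈ (ℂ²)^{⊗2N}`, physical factors ordered column by column (at vertex
`(r, c)` of the torus grid, both the top and the bottom factor of column `c` carry `e_{i(c)}`),
written in coordinates in the standard basis. -/
noncomputable def T9 (N : ℕ) : (Fin 2 × Fin N → Fin 2) → ℂ := fun b =>
  ∑ i : Fin N → Fin 2, ∏ v : Fin 2 × Fin N, if b v = i v.2 then (1 : ℂ) else 0

noncomputable def copyTensor : Fin 2 → Fin 2 → Fin 2 → Fin 2 → Fin 2 → ℂ :=
  fun b u x d l => if u = b ∧ d = b ∧ x = 0 ∧ l = 0 then 1 else 0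

section TorusTensor

variable {N : ℕ}

theorem T9_apply (b : Fin 2 × Fin N → Fin 2) :
    T9 N b = ∏ v : Fin 2 × Fin N, if b v = b (0, v.2) then 1 else 0 := by
  rw [T9, Fintype.sum_eq_single fun c => b (0, c)]
  intro i hi
  obtain ⟨c, hc⟩ := Function.ne_iff.mp hi
  exact Finset.prod_eq_zero (Finset.mem_univ (0, c)) (if_neg (Ne.symm hc))

theorem psi_copyTensor_apply (hN : 2 ≤ N) (b : Fin 2 × Fin N → Fin 2) :
    psi N hN (fun _ => copyTensor) b =
      ∏ v : Fin 2 × Fin N, if b v = b (0, v.2) then 1 else 0 := by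
  rw [psi, Fintype.sum_eq_single fun c => b (0, c), Fintype.sum_eq_single fun c => b (0, c),
    Fintype.sum_eq_single 0]
  · simp [copyTensor, eq_comm]
  · intro H hH
    obtain ⟨v, hv : H v ≠ 0⟩ := Function.ne_iff.mp hH
    exact Finset.prod_eq_zero (Finset.mem_univ v) (by simp [copyTensor, hv])
  · intro D hD
    obtain ⟨c, hc⟩ := Function.ne_iff.mp hD
    exact Fintype.sum_eq_zero _ fun H =>
      Finset.prod_eq_zero (Finset.mem_univ (0, c)) (by simp [copyTensor, hc])
  · intro U hU
    obtain ⟨c, hc⟩ := Function.ne_iff.mp hU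
    exact Fintype.sum_eq_zero _ fun D => Fintype.sum_eq_zero _ fun H =>
      Finset.prod_eq_zero (Finset.mem_univ (0, c)) (by simp [copyTensor, hc])

theorem psi_copyTensor (hN : 2 ≤ N) : psi N hN (fun _ => copyTensor) = T9 N := by
  funext b
  rw [psi_copyTensor_apply, T9_apply]

theorem cpRankLE_T9 : cpRankLE (T9 N) (2 ^ N) := by
  let e : Fin (2 ^ N) ≃ (Fin N → Fin 2) := (Fintype.equivFinOfCardEq (by simp)).symm
  refine ⟨fun j v k => if k = e j v.2 then 1 else 0, ?_⟩
  funext x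
  exact (e.sum_comp fun i => ∏ v : Fin 2 × Fin N, if x v = i v.2 then (1 : ℂ) else 0).symm

end TorusTensor

section Flattening

variable {N : ℕ} (S : Finset (Fin 2 × Fin N))

theorem continuous_flat : Continuous (flat N S) :=
  continuous_pi fun _ => continuous_pi fun _ => continuous_apply _

theorem rank_flat_le_of_cpRankLE {t : (Fin 2 × Fin N → Fin 2) → ℂ} {r : ℕ}
    (ht : cpRankLE t r) : (flat N S t).rank ≤ r := by
  obtain ⟨w, rfl⟩ := ht
  let A : Matrix ({v // v ∉ S} → Fin 2) (Fin r) ℂ :=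
    Matrix.of fun b j => ∏ v : {v // v ∉ S}, w j v (b v)
  let B : Matrix (Fin r) ({v // v ∈ S} → Fin 2) ℂ :=
    Matrix.of fun j a => ∏ v : {v // v ∈ S}, w j v (a v)
  have hAB : flat N S (fun x => ∑ j : Fin r, ∏ v, w j v (x v)) = A * B := by
    ext b a
    simp only [flat, A, B, Matrix.of_apply, Matrix.mul_apply]
    refine Finset.sum_congr rfl fun j _ => ?_
    rw [← Fintype.prod_subtype_mul_prod_subtype (· ∈ S), mul_comm]
    congr 1
    · exact Finset.prod_congr (by congr!) fun v _ => by rw [dif_neg v.2]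
    · exact Finset.prod_congr (by congr!) fun v _ => by rw [dif_pos v.2]
  calc (flat N S _).rank = (A * B).rank := by rw [hAB]
    _ ≤ B.rank := Matrix.rank_mul_le_right A B
    _ ≤ r := (Matrix.rank_le_card_height B).trans_eq (Fintype.card_fin r)

theorem notMem_closure_cpRankLE_of_det_ne_zero {n : Type*} [Fintype n] [DecidableEq n]
    (rows : n → {v // v ∉ S} → Fin 2) (cols : n → {v // v ∈ S} → Fin 2)
    {t : (Fin 2 × Fin N → Fin 2) → ℂ} (ht : ((flat N S t).submatrix rows cols).det ≠ 0)
    {r : ℕ} (hr : r < Fintype.card n) : t ∉ closure {s | cpRankLE s r} := by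
  let minor s := ((flat N S s).submatrix rows cols).det
  have hclosed : IsClosed {s | minor s = 0} :=
    isClosed_eq (((continuous_flat S).matrix_submatrix rows cols).matrix_det) continuous_const
  have hsub : {s | cpRankLE s r} ⊆ {s | minor s = 0} := by
    intro s hs
    by_contra hdet
    have hrank := Matrix.rank_of_det_ne_zero hdet
    have := (Matrix.rank_submatrix_le _ rows cols).trans (rank_flat_le_of_cpRankLE S hs)
    omega
  exact fun hmem => ht (closure_minimal hsub hclosed hmem)

end Flattening

def topRow (N : ℕ) : Finset (Fin 2 × Fin N) := {v | v.1 = 0}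

def columnwise {N : ℕ} {p : Fin 2 × Fin N → Prop} (i : Fin N → Fin 2) :
    Subtype p → Fin 2 :=
  fun v => i v.1.2

theorem flat_T9_submatrix_columnwise {N : ℕ} :
    (flat N (topRow N) (T9 N)).submatrix columnwise columnwise = 1 := by
  ext i j
  simp only [Matrix.submatrix_apply, flat, Matrix.of_apply, columnwise]
  simp [topRow, T9_apply, Matrix.one_apply, Finset.prod_boole, funext_iff]

theorem T9_notMem_closure_cpRankLE {N r : ℕ} (hr : r < 2 ^ N) :
    T9 N ∉ closure {t | cpRankLE t r} :=
  notMem_closure_cpRankLE_of_det_ne_zero (topRow N) columnwise columnwise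
    (by simp [flat_T9_submatrix_columnwise]) (by simpa using hr)

theorem stmt9_general (N : ℕ) (hN : 2 ≤ N) :
    (∃ T : Fin 2 × Fin N → (Fin 2 → Fin 2 → Fin 2 → Fin 2 → Fin 2 → ℂ),
        psi N hN T = T9 N) ∧
      T9 N ∈ closure {t : (Fin 2 × Fin N → Fin 2) → ℂ | cpRankLE t (2 ^ N)} ∧
      ∀ r : ℕ, r < 2 ^ N →
        T9 N ∉ closure {t : (Fin 2 × Fin N → Fin 2) → ℂ | cpRankLE t r} :=
  ⟨⟨_, psi_copyTensor hN⟩, subset_closure cpRankLE_T9, fun _ => T9_notMem_closure_cpRankLE⟩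

/-- There is a tuple of tensors `(T_v)_v ∈ (ℂ² ⊗ (ℂ²)^{⊗4})^{2N}` whose torus contraction
`ψ((T_v)_v) ∈ (ℂ²)^{⊗2N}` equals
`Σ_{i : Fin N → Fin 2} e_{i(1)} ⊗ e_{i(1)} ⊗ ⋯ ⊗ e_{i(N)} ⊗ e_{i(N)}`, and this tensor has
border rank exactly `2^N`: it lies in the closure (Euclidean topology) of the set of tensors of
rank at most `2^N` but, for every `r < 2^N`, not in the closure of the set of tensors of rank at
most `r`.  In particular a tensor of border rank `2^N` arises as a `2 × N` torus tensor network
contraction with bond dimension `2` and physical dimension `2`. -/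
theorem stmt9 (N : ℕ) (hN : 2 ≤ N) (hNeven : Even N) :
    (∃ T : Fin 2 × Fin N → (Fin 2 → Fin 2 → Fin 2 → Fin 2 → Fin 2 → ℂ),
        psi N hN T = T9 N) ∧
      T9 N ∈ closure {t : (Fin 2 × Fin N → Fin 2) → ℂ | cpRankLE t (2 ^ N)} ∧
      ∀ r : ℕ, r < 2 ^ N →
        T9 N ∉ closure {t : (Fin 2 × Fin N → Fin 2) → ℂ | cpRankLE t r} :=
  stmt9_general N hN
end
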